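/- arXiv:1608.08505 — 7 statements merged into one kernel-verified Lean document; each statement's English description precedes it below -/
import Mathlib

section
/- Let E be a nonempty finite set, for each e ∈ E let A_e be a nonempty finite set, with the sets A_e pairwise disjoint, let A = ⋃_{e∈E} A_e, let C be a simple graph on vertex set A in which no edge joins two elements of the same set A_e, let d : A → ℝ, and let M > 0. Call a pair (x,y) with x : A → {0,1} and y : E(C) → {0,1} feasible if ∑_{p ∈ A_e} x(p) = 1 for every e ∈ E and x(p) + x(q) ≤ y(p,q) + 1 for every edge {p,q} of C. Then the minimum over all feasible pairs (x,y) of ∑_{{p,q} ∈ E(C)} y(p,q) + (1/M)·∑_{p ∈ A} d(p)·x(p) equals the minimum over all selections f of ov(f) + (1/M)·∑_{e ∈ E} d(f(e)). -/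
/-!
A binary `x` with exactly one `1` in each block `Ae e` is the indicator of a selection `f`, and
`f` is injective because the blocks are disjoint. Constraint (3) forces `y = 1` on every conflict
edge with both ends selected, and under `Sym2.map f` these edges are exactly the images of the
overlapping pairs of `f`; so every feasible `(x, y)` costs at least as much as its selection, with
equality when `y` is the indicator of those edges. Hence both minima are attained at a cheapest
selection.
-/

open Finset Function

section

variable {α E : Type*}

theorem Finset.exists_eq_ite_of_sum_eq_one {s : Finset α} {x : α → ℕ} [DecidableEq α]
    (h : ∑ p ∈ s, x p = 1) : ∃ a ∈ s, ∀ p ∈ s, x p = if p = a then 1 else 0 := by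
  obtain ⟨a, ha, hxa⟩ := exists_ne_zero_of_sum_ne_zero (h ▸ one_ne_zero)
  have hrest : ∑ p ∈ s.erase a, x p = 0 := by
    have := add_sum_erase s x ha
    omega
  refine ⟨a, ha, fun p hp => ?_⟩
  split_ifs with hpa
  · subst hpa
    have := add_sum_erase s x hp
    omega
  · exact sum_eq_zero_iff.mp hrest p (mem_erase.mpr ⟨hpa, hp⟩)

section Selection

variable {Ae : E → Finset α} {f : E → α}

theorem injective_of_forall_mem (hdisj : Pairwise (Disjoint on Ae)) (hf : ∀ e, f e ∈ Ae e) :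
    Injective f := fun e g hfeg =>
  hdisj.eq (not_disjoint_iff.mpr ⟨f e, hf e, hfeg ▸ hf g⟩)

theorem mem_image_iff_eq_of_mem [Fintype E] [DecidableEq α] (hdisj : Pairwise (Disjoint on Ae))
    (hf : ∀ e, f e ∈ Ae e) {e : E} {p : α} (hp : p ∈ Ae e) :
    p ∈ univ.image f ↔ p = f e := by
  refine ⟨?_, fun h => h ▸ mem_image_of_mem f (mem_univ e)⟩
  rw [mem_image]
  rintro ⟨g, -, rfl⟩
  rw [hdisj.eq (not_disjoint_iff.mpr ⟨f g, hf g, hp⟩)]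

theorem sum_biUnion_mul_eq_sum_comp {R : Type*} [Semiring R] [Fintype E] [DecidableEq α]
    (hdisj : Pairwise (Disjoint on Ae)) (hf : ∀ e, f e ∈ Ae e) {x : α → ℕ}
    (hx : ∀ e, ∀ p ∈ Ae e, x p = if p = f e then 1 else 0) (d : α → R) :
    ∑ p ∈ univ.biUnion Ae, d p * x p = ∑ e, d (f e) := by
  rw [sum_biUnion (fun e _ g _ h => hdisj h)]
  refine sum_congr rfl fun e _ => ?_
  rw [sum_congr rfl fun p hp => by rw [hx e p hp]]
  simp [hf e]

end Selection

theorem ite_mem_add_ite_mem_le_ite_mem_sym2 [DecidableEq α] (S : Finset α) (p q : α) :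
    (if p ∈ S then 1 else 0) + (if q ∈ S then 1 else 0) ≤
      (if s(p, q) ∈ S.sym2 then 1 else 0) + 1 := by
  simp only [mk_mem_sym2_iff]
  split_ifs <;> simp_all

section Overlap

variable [Fintype α] [DecidableEq α] (C : SimpleGraph α) [DecidableRel C.Adj]

theorem card_filter_map_mem_edgeFinset_eq_card_inter_sym2 [Fintype E] [DecidableEq E]
    {f : E → α} (hf : Injective f) :
    #{s : Sym2 E | ¬ s.IsDiag ∧ s.map f ∈ C.edgeFinset} =
      #(C.edgeFinset ∩ (univ.image f).sym2) := by
  rw [← card_image_of_injective _ (Sym2.map.injective hf)]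
  congr 1
  ext s
  simp only [mem_image, mem_filter, mem_univ, true_and, mem_inter, mem_sym2_iff]
  constructor
  · rintro ⟨t, ⟨-, ht⟩, rfl⟩
    exact ⟨ht, fun p hp => by obtain ⟨e, -, rfl⟩ := Sym2.mem_map.mp hp; exact ⟨e, rfl⟩⟩
  · induction s using Sym2.ind with
    | _ p q =>
    rintro ⟨hpq, hs⟩
    obtain ⟨e, rfl⟩ := hs p (Sym2.mem_mk_left p q)
    obtain ⟨g, rfl⟩ := hs q (Sym2.mem_mk_right _ q)
    refine ⟨s(e, g), ⟨?_, hpq⟩, rfl⟩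
    intro hdiag
    rw [Sym2.mk_isDiag_iff] at hdiag
    subst hdiag
    exact C.irrefl (SimpleGraph.mem_edgeFinset.mp hpq)

variable {C}

theorem card_edgeFinset_inter_sym2_le_sum {S : Finset α} {x : α → ℕ} {y : Sym2 α → ℕ}
    (hx : ∀ p ∈ S, x p = 1) (hcon : ∀ p q, C.Adj p q → x p + x q ≤ y s(p, q) + 1) :
    #(C.edgeFinset ∩ S.sym2) ≤ ∑ s ∈ C.edgeFinset, y s := by
  rw [← filter_mem_eq_inter, card_filter]
  refine sum_le_sum fun s hs => ?_
  induction s using Sym2.ind with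
  | _ p q =>
  split_ifs with hpq
  · rw [mk_mem_sym2_iff] at hpq
    have := hcon p q (SimpleGraph.mem_edgeFinset.mp hs)
    rw [hx p hpq.1, hx q hpq.2] at this
    omega
  · exact Nat.zero_le _

end Overlap

theorem exists_ilp_solution_of_selection [Fintype α] [DecidableEq α] [Fintype E]
    (C : SimpleGraph α) [DecidableRel C.Adj] {Ae : E → Finset α} {f : E → α}
    (hdisj : Pairwise (Disjoint on Ae)) (hf : ∀ e, f e ∈ Ae e) :
    ∃ (x : α → ℕ) (y : Sym2 α → ℕ), (∀ p, x p ≤ 1) ∧ (∀ s, y s ≤ 1) ∧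
      (∀ p q, C.Adj p q → x p + x q ≤ y s(p, q) + 1) ∧
      (∀ e, ∀ p ∈ Ae e, x p = if p = f e then 1 else 0) ∧
      ∑ s ∈ C.edgeFinset, y s = #(C.edgeFinset ∩ (univ.image f).sym2) := by
  refine ⟨fun p => if p ∈ univ.image f then 1 else 0,
    fun s => if s ∈ (univ.image f).sym2 then 1 else 0,
    fun p => ite_le_one le_rfl zero_le_one, fun s => ite_le_one le_rfl zero_le_one,
    fun p q _ => ite_mem_add_ite_mem_le_ite_mem_sym2 _ p q,
    fun e p hp => by simp only [mem_image_iff_eq_of_mem hdisj hf hp], ?_⟩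
  rw [sum_boole, filter_mem_eq_inter, Nat.cast_id]

end

open Finset in
theorem stmt2_general {α E : Type*} [Fintype α] [DecidableEq α] [Fintype E] [DecidableEq E]
    (Ae : E → Finset α) (hne : ∀ e, (Ae e).Nonempty)
    (hdisj : ∀ e g, e ≠ g → Disjoint (Ae e) (Ae g))
    (A : Finset α) (hA : A = Finset.univ.biUnion Ae)
    (C : SimpleGraph α) [DecidableRel C.Adj]
    (d : α → ℝ) (M : ℝ)
    (ov : (E → α) → ℕ)
    (hov : ∀ f : E → α, ov f = (Finset.univ.filter
      (fun s : Sym2 E => ¬ s.IsDiag ∧ Sym2.map f s ∈ C.edgeFinset)).card) :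
    ∃ v : ℝ,
      IsLeast {w : ℝ | ∃ (x : α → ℕ) (y : Sym2 α → ℕ),
          (∀ p, x p ≤ 1) ∧ (∀ s, y s ≤ 1) ∧
          (∀ e, ∑ p ∈ Ae e, x p = 1) ∧
          (∀ p q, C.Adj p q → x p + x q ≤ y s(p, q) + 1) ∧
          w = (∑ s ∈ C.edgeFinset, (y s : ℝ)) + (1 / M) * ∑ p ∈ A, d p * (x p : ℝ)} v ∧
      IsLeast {w : ℝ | ∃ f : E → α, (∀ e, f e ∈ Ae e) ∧
          w = (ov f : ℝ) + (1 / M) * ∑ e : E, d (f e)} v := by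
  have hdisj : Pairwise (Disjoint on Ae) := fun e g => hdisj e g
  have hov (f : E → α) (hf : ∀ e, f e ∈ Ae e) : ov f = #(C.edgeFinset ∩ (univ.image f).sym2) :=
    (hov f).trans <| card_filter_map_mem_edgeFinset_eq_card_inter_sym2 C <|
      injective_of_forall_mem hdisj hf
  subst hA
  let val (f : E → α) : ℝ := ov f + (1 / M) * ∑ e, d (f e)
  obtain ⟨f₀, hf₀, hmin⟩ := Set.exists_min_image {f : E → α | ∀ e, f e ∈ Ae e} val
    (Set.toFinite _) ⟨fun e => (hne e).choose, fun e => (hne e).choose_spec⟩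
  refine ⟨val f₀, ⟨?_, ?_⟩, ⟨f₀, hf₀, rfl⟩, fun w ⟨f, hf, hw⟩ => hw ▸ hmin f hf⟩
  · obtain ⟨x, y, hx, hy, hcon, hxf, hyov⟩ := exists_ilp_solution_of_selection C hdisj hf₀
    refine ⟨x, y, hx, hy, fun e => by simp [sum_congr rfl (hxf e), hf₀ e], hcon, ?_⟩
    rw [sum_biUnion_mul_eq_sum_comp hdisj hf₀ hxf, ← Nat.cast_sum, hyov]
    simp only [val, hov f₀ hf₀]
  · rintro w ⟨x, y, -, -, hsum, hcon, rfl⟩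
    choose f hf hxf using fun e => exists_eq_ite_of_sum_eq_one (hsum e)
    refine (hmin f hf).trans ?_
    rw [sum_biUnion_mul_eq_sum_comp hdisj hf hxf, ← Nat.cast_sum]
    simp only [val, hov f hf]
    gcongr
    exact card_edgeFinset_inter_sym2_le_sum
      (fun p hp => by obtain ⟨e, -, rfl⟩ := mem_image.mp hp; simp [hxf e (f e) (hf e)]) hcon

open Finset in
/-- Correctness of the ILP formulation: with `E`, `Ae`, `A`, `C` as
before, `d : A → ℝ` and `M > 0`, the minimum over all feasible pairs `(x, y)`
(binary `x` choosing exactly one position in each `Ae e`, binary `y` on the edges of `C`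
with `x p + x q ≤ y {p,q} + 1` on each edge `{p,q}`) of
`∑_{{p,q} ∈ E(C)} y {p,q} + (1/M) ∑_{p ∈ A} d p * x p`
equals the minimum over all selections `f` of `ov f + (1/M) ∑_{e ∈ E} d (f e)`. -/
theorem stmt2 {α E : Type*} [Fintype α] [DecidableEq α] [Fintype E] [DecidableEq E] [Nonempty E]
    (Ae : E → Finset α) (hne : ∀ e, (Ae e).Nonempty)
    (hdisj : ∀ e g, e ≠ g → Disjoint (Ae e) (Ae g))
    (A : Finset α) (hA : A = Finset.univ.biUnion Ae)
    (C : SimpleGraph α) [DecidableRel C.Adj]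
    (hCA : ∀ p q, C.Adj p q → p ∈ A ∧ q ∈ A)
    (hCin : ∀ e, ∀ p ∈ Ae e, ∀ q ∈ Ae e, ¬ C.Adj p q)
    (d : α → ℝ) (M : ℝ) (hM : 0 < M)
    (ov : (E → α) → ℕ)
    (hov : ∀ f : E → α, ov f = (Finset.univ.filter
      (fun s : Sym2 E => ¬ s.IsDiag ∧ Sym2.map f s ∈ C.edgeFinset)).card) :
    ∃ v : ℝ,
      IsLeast {w : ℝ | ∃ (x : α → ℕ) (y : Sym2 α → ℕ),
          (∀ p, x p ≤ 1) ∧ (∀ s, y s ≤ 1) ∧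
          (∀ e, ∑ p ∈ Ae e, x p = 1) ∧
          (∀ p q, C.Adj p q → x p + x q ≤ y s(p, q) + 1) ∧
          w = (∑ s ∈ C.edgeFinset, (y s : ℝ)) + (1 / M) * ∑ p ∈ A, d p * (x p : ℝ)} v ∧
      IsLeast {w : ℝ | ∃ f : E → α, (∀ e, f e ∈ Ae e) ∧
          w = (ov f : ℝ) + (1 / M) * ∑ e : E, d (f e)} v :=
  stmt2_general Ae hne hdisj A hA C d M ov hov
end

section
/- Let P be a nonempty finite set, let δ : P → ℕ, σ : P → ℕ, let M > 0 be real, let d : P → ℝ satisfy 0 < d(p) ≤ M for all p ∈ P, let T be a real number with T ≥ δ(p) + d(p)/M for all p ∈ P, and define the cost c(p) = δ(p) + d(p)/M + T·σ(p). Suppose there exists p ∈ P with σ(p) = 0. Then: (a) every p₀ minimizing c over P satisfies σ(p₀) = 0; (b) moreover, every such minimizer p₀ satisfies δ(p₀) = min { δ(p) : σ(p) = 0 }, and d(p₀) = min { d(p) : σ(p) = 0 and δ(p) = min_{q: σ(q)=0} δ(q) }. -/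
/-!
The normalized distance `d p / M` lies in `(0, 1]`, so it only breaks ties between positions
with equal `δ` and never overturns a strict comparison of the integers `δ`. Likewise `T` bounds
every penalty-free cost `δ p + d p / M`, so a single unit of `σ` already costs more than any
position with `σ = 0`.
-/

theorem Nat.le_of_cast_add_le_cast_add {m n : ℕ} {x y : ℝ} (hx : 0 < x) (hy : y ≤ 1)
    (h : m + x ≤ n + y) : m ≤ n := by
  have : (m : ℝ) < n + 1 := by linarith
  exact Nat.lt_succ_iff.mp (by exact_mod_cast this)

theorem eq_zero_of_add_mul_le {x y T : ℝ} {s : ℕ} (hx : 0 < x) (hT : 0 ≤ T) (hyT : y ≤ T)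
    (h : x + T * s ≤ y) : s = 0 := by
  by_contra hs
  have : (1 : ℝ) ≤ s := by exact_mod_cast Nat.one_le_iff_ne_zero.mpr hs
  nlinarith

theorem stmt5_general {P : Type*}
    (δ σ : P → ℕ) (M : ℝ) (hM : 0 < M)
    (d : P → ℝ) (hd : ∀ p, 0 < d p ∧ d p ≤ M)
    (T : ℝ) (hT : ∀ p, (δ p : ℝ) + d p / M ≤ T)
    (c : P → ℝ) (hc : ∀ p, c p = (δ p : ℝ) + d p / M + T * (σ p : ℝ))
    (hex : ∃ p, σ p = 0)
    (p₀ : P) (hp₀ : ∀ p, c p₀ ≤ c p) :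
    σ p₀ = 0 ∧
    IsLeast {n : ℕ | ∃ p, σ p = 0 ∧ δ p = n} (δ p₀) ∧
    IsLeast {v : ℝ | ∃ p, σ p = 0 ∧ (∀ q, σ q = 0 → δ p ≤ δ q) ∧ d p = v} (d p₀) := by
  obtain ⟨q₀, hq₀⟩ := hex
  have hfrac_pos p : 0 < d p / M := div_pos (hd p).1 hM
  have hfrac_le_one p : d p / M ≤ 1 := (div_le_one hM).2 (hd p).2
  have hbase_pos p : 0 < (δ p : ℝ) + d p / M :=
    add_pos_of_nonneg_of_pos (Nat.cast_nonneg _) (hfrac_pos p)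
  have hσ : σ p₀ = 0 :=
    eq_zero_of_add_mul_le (hbase_pos p₀) ((hbase_pos q₀).le.trans (hT q₀)) (hT q₀)
      (by simpa [hc, hq₀] using hp₀ q₀)
  have hbase_le q (hq : σ q = 0) : (δ p₀ : ℝ) + d p₀ / M ≤ δ q + d q / M := by
    simpa [hc, hσ, hq] using hp₀ q
  have hδ q (hq : σ q = 0) : δ p₀ ≤ δ q :=
    Nat.le_of_cast_add_le_cast_add (hfrac_pos p₀) (hfrac_le_one q) (hbase_le q hq)
  refine ⟨hσ, ⟨⟨p₀, hσ, rfl⟩, ?_⟩, ⟨p₀, hσ, hδ, rfl⟩, ?_⟩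
  · rintro n ⟨q, hq, rfl⟩
    exact hδ q hq
  · rintro v ⟨q, hq, hq_min, rfl⟩
    have hδ_eq : δ q = δ p₀ := le_antisymm (hq_min p₀ hσ) (hδ q hq)
    have hfrac_le : d p₀ / M ≤ d q / M := by simpa [hδ_eq] using hbase_le q hq
    exact (div_le_div_iff_of_pos_right hM).1 hfrac_le

/-- Correctness of the greedy cost function
`c p = δ p + d p / M + T · σ p`, where `0 < d p ≤ M`, `T ≥ δ p + d p / M` for every `p`,
and some `p` has `σ p = 0`.  Every minimizer `p₀` of `c` satisfies `σ p₀ = 0`,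
has `δ p₀` minimal among `{δ p : σ p = 0}`, and `d p₀` minimal among
`{d p : σ p = 0 and δ p minimal among σ = 0}`. -/
theorem stmt5 {P : Type*} [Fintype P] [Nonempty P]
    (δ σ : P → ℕ) (M : ℝ) (hM : 0 < M)
    (d : P → ℝ) (hd : ∀ p, 0 < d p ∧ d p ≤ M)
    (T : ℝ) (hT : ∀ p, (δ p : ℝ) + d p / M ≤ T)
    (c : P → ℝ) (hc : ∀ p, c p = (δ p : ℝ) + d p / M + T * (σ p : ℝ))
    (hex : ∃ p, σ p = 0)
    (p₀ : P) (hp₀ : ∀ p, c p₀ ≤ c p) :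
    σ p₀ = 0 ∧
    IsLeast {n : ℕ | ∃ p, σ p = 0 ∧ δ p = n} (δ p₀) ∧
    IsLeast {v : ℝ | ∃ p, σ p = 0 ∧ (∀ q, σ q = 0 → δ p ≤ δ q) ∧ d p = v} (d p₀) :=
  stmt5_general δ σ M hM d hd T hT c hc hex p₀ hp₀
end

section
/- In the Euclidean plane, let r > 0, let c be a point, and let a ≠ b be points with segment [a,b] (the closed segment joining a and b). Then the segment [a,b] intersects the circle {x : dist(x,c) = r} in exactly two points if and only if the distance from c to the segment [a,b] (the infimum of dist(c,x) over x ∈ [a,b]) is strictly less than r, and dist(c,a) ≥ r, and dist(c,b) ≥ r. -/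
/-!
Along the segment, `t ↦ dist (a + t • (b - a)) c ^ 2` is a quadratic in `t` with leading
coefficient `‖b - a‖ ^ 2 > 0`, hence strictly convex. A continuous strictly convex function on
`[0, 1]` takes a value `m` exactly twice iff it drops below `m` somewhere while being `≥ m` at
both endpoints: the intermediate value theorem gives one crossing on each side of the dip, and
strict convexity rules out a third.
-/

open Set AffineMap

namespace StrictConvexOn

variable {s : Set ℝ} {f : ℝ → ℝ} {m x y z : ℝ}

lemma lt_of_mem_Ioo (hf : StrictConvexOn ℝ s f) (hx : x ∈ s) (hz : z ∈ s) (hy : y ∈ Ioo x z)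
    (hfx : f x ≤ m) (hfz : f z ≤ m) : f y < m := by
  have hxz : x < z := hy.1.trans hy.2
  calc f y < max (f x) (f z) :=
        hf.lt_on_openSegment hx hz hxz.ne (by rwa [openSegment_eq_Ioo hxz])
    _ ≤ m := max_le hfx hfz

variable {p q : ℝ}

lemma exists_lt_of_encard_levelSet_eq_two (hf : StrictConvexOn ℝ (Icc p q) f)
    (h : (Icc p q ∩ f ⁻¹' {m}).encard = 2) :
    (∃ t ∈ Icc p q, f t < m) ∧ m ≤ f p ∧ m ≤ f q := by
  obtain ⟨x, z, hxz, hlevel⟩ := encard_eq_two.1 h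
  wlog hlt : x < z generalizing x z
  · exact this z x hxz.symm (by rw [hlevel, pair_comm]) (hxz.lt_or_gt.resolve_left hlt)
  have hx : x ∈ Icc p q ∩ f ⁻¹' {m} := hlevel ▸ mem_insert x {z}
  have hz : z ∈ Icc p q ∩ f ⁻¹' {m} := hlevel ▸ mem_insert_of_mem x rfl
  simp only [mem_inter_iff, mem_preimage, mem_singleton_iff] at hx hz
  have hpq : p ≤ q := hx.1.1.trans hx.1.2
  refine ⟨⟨(x + z) / 2, ?_, ?_⟩, ?_, ?_⟩
  · constructor <;> linarith [hx.1.1, hz.1.2]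
  · exact hf.lt_of_mem_Ioo hx.1 hz.1 ⟨by linarith, by linarith⟩ hx.2.le hz.2.le
  · by_contra! hp
    have hpx : p < x := hx.1.1.lt_of_ne (by rintro rfl; linarith)
    exact (hf.lt_of_mem_Ioo (left_mem_Icc.2 hpq) hz.1 ⟨hpx, hlt⟩ hp.le hz.2.le).ne hx.2
  · by_contra! hq
    have hzq : z < q := hz.1.2.lt_of_ne (by rintro rfl; linarith)
    exact (hf.lt_of_mem_Ioo hx.1 (right_mem_Icc.2 hpq) ⟨hlt, hzq⟩ hx.2.le hq.le).ne hz.2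

lemma encard_levelSet_eq_two_of_exists_lt (hf : StrictConvexOn ℝ (Icc p q) f)
    (hcont : ContinuousOn f (Icc p q)) (hlt : ∃ t ∈ Icc p q, f t < m) (hp : m ≤ f p)
    (hq : m ≤ f q) : (Icc p q ∩ f ⁻¹' {m}).encard = 2 := by
  obtain ⟨t, ht, hft⟩ := hlt
  obtain ⟨x, hx, hfx⟩ := intermediate_value_Icc' ht.1 (hcont.mono (Icc_subset_Icc_right ht.2))
    ⟨hft.le, hp⟩
  obtain ⟨z, hz, hfz⟩ := intermediate_value_Icc ht.2 (hcont.mono (Icc_subset_Icc_left ht.1))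
    ⟨hft.le, hq⟩
  have hxt : x < t := hx.2.lt_of_ne (by rintro rfl; linarith)
  have htz : t < z := hz.1.lt_of_ne' (by rintro rfl; linarith)
  have hxI : x ∈ Icc p q := ⟨hx.1, hx.2.trans ht.2⟩
  have hzI : z ∈ Icc p q := ⟨ht.1.trans hz.1, hz.2⟩
  suffices Icc p q ∩ f ⁻¹' {m} = {x, z} by
    rw [this, encard_pair (hxt.trans htz).ne]
  ext y
  simp only [mem_inter_iff, mem_preimage, mem_singleton_iff, mem_insert_iff]
  refine ⟨fun ⟨hy, hfy⟩ => ?_, by rintro (rfl | rfl) <;> simp_all⟩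
  by_contra! hyxz
  rcases lt_or_gt_of_ne hyxz.1 with hyx | hxy
  · exact (hf.lt_of_mem_Ioo hy ht ⟨hyx, hxt⟩ hfy.le hft.le).ne hfx
  rcases lt_or_gt_of_ne hyxz.2 with hyz | hzy
  · exact (hf.lt_of_mem_Ioo hxI hzI ⟨hxy, hyz⟩ hfx.le hfz.le).ne hfy
  · exact (hf.lt_of_mem_Ioo ht hy ⟨htz, hzy⟩ hft.le hfy.le).ne hfz

lemma encard_levelSet_eq_two_iff (hf : StrictConvexOn ℝ (Icc p q) f)
    (hcont : ContinuousOn f (Icc p q)) :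
    (Icc p q ∩ f ⁻¹' {m}).encard = 2 ↔ (∃ t ∈ Icc p q, f t < m) ∧ m ≤ f p ∧ m ≤ f q :=
  ⟨hf.exists_lt_of_encard_levelSet_eq_two, fun ⟨hlt, hp, hq⟩ =>
    hf.encard_levelSet_eq_two_of_exists_lt hcont hlt hp hq⟩

end StrictConvexOn

lemma strictConvexOn_univ_quadratic {A : ℝ} (hA : 0 < A) (B C : ℝ) :
    StrictConvexOn ℝ univ fun t : ℝ => A * t ^ 2 + B * t + C := by
  refine ⟨convex_univ, fun x _ y _ hxy a b ha hb hab => ?_⟩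
  obtain rfl : b = 1 - a := by linarith
  have hgap : 0 < A * a * (1 - a) * (x - y) ^ 2 := by
    have := sub_ne_zero.2 hxy
    positivity
  simp only [smul_eq_mul]
  nlinarith

section InnerProductSpace

variable {E : Type*} [NormedAddCommGroup E] [InnerProductSpace ℝ E]

open RealInnerProductSpace

lemma dist_lineMap_sq (a b c : E) (t : ℝ) :
    dist (lineMap a b t) c ^ 2 = ‖b - a‖ ^ 2 * t ^ 2 + 2 * ⟪b - a, a - c⟫ * t + ‖a - c‖ ^ 2 := by
  rw [dist_eq_norm, lineMap_apply_module', add_sub_assoc, norm_add_sq_real, norm_smul,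
    real_inner_smul_left, Real.norm_eq_abs, mul_pow, sq_abs]
  ring

lemma strictConvexOn_dist_lineMap_sq {a b : E} (hab : a ≠ b) (c : E) :
    StrictConvexOn ℝ univ fun t : ℝ => dist (lineMap a b t) c ^ 2 := by
  simp_rw [dist_lineMap_sq]
  exact strictConvexOn_univ_quadratic (pow_pos (norm_pos_iff.2 (sub_ne_zero.2 hab.symm)) 2) _ _

end InnerProductSpace

open Metric in
theorem encard_segment_inter_sphere_eq_two_iff {E : Type*} [NormedAddCommGroup E]
    [InnerProductSpace ℝ E] {a b c : E} {r : ℝ} (hab : a ≠ b) (hr : 0 ≤ r) :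
    (segment ℝ a b ∩ sphere c r).encard = 2 ↔
      infDist c (segment ℝ a b) < r ∧ r ≤ dist c a ∧ r ≤ dist c b := by
  have hconvex : StrictConvexOn ℝ (Icc 0 1) fun t : ℝ => dist (lineMap a b t) c ^ 2 :=
    (strictConvexOn_dist_lineMap_sq hab c).subset (subset_univ _) (convex_Icc 0 1)
  have hsphere :
      lineMap a b ⁻¹' sphere c r = (fun t : ℝ => dist (lineMap a b t) c ^ 2) ⁻¹' {r ^ 2} := by
    ext t
    simp only [mem_preimage, mem_sphere, mem_singleton_iff, sq_eq_sq₀ dist_nonneg hr]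
  rw [segment_eq_image_lineMap, ← image_inter_preimage, (lineMap_injective ℝ hab).encard_image,
    hsphere, hconvex.encard_levelSet_eq_two_iff (by fun_prop),
    infDist_lt_iff ((nonempty_Icc.2 zero_le_one).image _), exists_mem_image]
  simp only [lineMap_apply_zero, lineMap_apply_one, sq_lt_sq₀ dist_nonneg hr,
    sq_le_sq₀ hr dist_nonneg, dist_comm c]

/-- In the Euclidean plane, with `r > 0`, a point `c`, and a
nondegenerate closed segment `[a, b]`, the segment meets the circle of radius `r`
around `c` in exactly two points if and only if the distance from `c` to the segment
is `< r` while both endpoints are at distance `≥ r` from `c`. -/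
theorem stmt7 (r : ℝ) (hr : 0 < r) (c a b : EuclideanSpace ℝ (Fin 2)) (hab : a ≠ b) :
    (segment ℝ a b ∩ Metric.sphere c r).encard = 2 ↔
      (Metric.infDist c (segment ℝ a b) < r ∧ r ≤ dist c a ∧ r ≤ dist c b) :=
  encard_segment_inter_sphere_eq_two_iff hab hr.le
end

section
/- Let r > 0 and let A, B, C be the vertices of an equilateral triangle in the Euclidean plane with side length 2√3·r. For a point p on the segment [A,B], the following are equivalent: (1) dist(p, [B,C]) ≥ r and dist(p, [C,A]) ≥ r, where dist(p, S) denotes the infimum of distances from p to points of the segment S; (2) dist(p, midpoint(A,B)) ≤ r/√3. Moreover, at the two extreme points p = midpoint(A,B) ± (r/√3)·(B−A)/‖B−A‖, the distance from p to the nearer of the two other sides equals exactly r. -/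
open RealInnerProductSpace

open Metric in
private lemma infDist_seg_eq {E : Type*} [NormedAddCommGroup E] [InnerProductSpace ℝ E]
    (X Y p : E) (d : ℝ)
    (hub : ∃ q ∈ segment ℝ X Y, dist p q ≤ d)
    (hlb : ∀ q ∈ segment ℝ X Y, d ≤ dist p q) :
    Metric.infDist p (segment ℝ X Y) = d := by
  refine le_antisymm ?_ ?_
  · obtain ⟨q, hq, hpq⟩ := hub
    exact le_trans (Metric.infDist_le_dist_of_mem hq) hpq
  · rw [Metric.infDist_eq_iInf]
    have : Nonempty (segment ℝ X Y) := ⟨⟨X, left_mem_segment ℝ X Y⟩⟩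
    exact le_ciInf fun q => hlb q q.2

/-- distance from a point of side AB to side CA, parametrized. -/
private lemma keyCA (r : ℝ) (hr : 0 < r) (A B C : EuclideanSpace ℝ (Fin 2))
    (hAB : dist A B = 2 * Real.sqrt 3 * r) (hBC : dist B C = 2 * Real.sqrt 3 * r)
    (hCA : dist C A = 2 * Real.sqrt 3 * r)
    (t : ℝ) (ht0 : 0 ≤ t) (ht1 : t ≤ 1) :
    Metric.infDist (A + t • (B - A)) (segment ℝ C A) = 3 * r * t := by
  have hs3 : Real.sqrt 3 ^ 2 = 3 := Real.sq_sqrt (by norm_num)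
  have hs3pos : 0 < Real.sqrt 3 := Real.sqrt_pos.mpr (by norm_num)
  set u : EuclideanSpace ℝ (Fin 2) := B - A with hu_def
  set v : EuclideanSpace ℝ (Fin 2) := C - A with hv_def
  have hu : ‖u‖ ^ 2 = 12 * r ^ 2 := by
    have : ‖u‖ = 2 * Real.sqrt 3 * r := by
      rw [hu_def, ← dist_eq_norm, dist_comm]; exact hAB
    rw [this]; nlinarith
  have hv : ‖v‖ ^ 2 = 12 * r ^ 2 := by
    have : ‖v‖ = 2 * Real.sqrt 3 * r := by
      rw [hv_def, ← dist_eq_norm]; exact hCA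
    rw [this]; nlinarith
  have huv : inner ℝ u v = (6 * r ^ 2 : ℝ) := by
    have h1 : ‖u - v‖ ^ 2 = 12 * r ^ 2 := by
      have : u - v = B - C := by rw [hu_def, hv_def]; abel
      rw [this, ← dist_eq_norm, hBC]; nlinarith
    have h2 := norm_sub_sq_real u v
    linarith [h1, h2, hu, hv]
  have hnorm : ∀ x y : ℝ, ‖x • u - y • v‖ ^ 2 = (x ^ 2 - x * y + y ^ 2) * (12 * r ^ 2) := by
    intro x y
    have h2 := norm_sub_sq_real (x • u) (y • v)
    rw [real_inner_smul_left, real_inner_smul_right, huv, norm_smul, norm_smul,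
        mul_pow, mul_pow, Real.norm_eq_abs, Real.norm_eq_abs, sq_abs, sq_abs, hu, hv] at h2
    rw [h2]; ring
  have hdist : ∀ y : ℝ, dist (A + t • u) (A + y • v) ^ 2
      = (t ^ 2 - t * y + y ^ 2) * (12 * r ^ 2) := by
    intro y
    rw [dist_eq_norm]
    have : A + t • u - (A + y • v) = t • u - y • v := by abel
    rw [this, hnorm]
  have hseg : segment ℝ C A = (fun θ : ℝ => A + θ • v) '' Set.Icc (0:ℝ) 1 := by
    rw [segment_symm, segment_eq_image']
  apply infDist_seg_eq
  · refine ⟨A + (t / 2) • v, ?_, ?_⟩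
    · rw [hseg]
      exact ⟨t / 2, ⟨by linarith, by linarith⟩, rfl⟩
    · have h2 := hdist (t / 2)
      have hd : 0 ≤ dist (A + t • u) (A + (t / 2) • v) := dist_nonneg
      have h3 : dist (A + t • u) (A + (t / 2) • v) ^ 2 = (3 * r * t) ^ 2 := by
        rw [h2]; ring
      have h4 : 0 ≤ 3 * r * t := by positivity
      nlinarith
  · intro q hq
    rw [hseg] at hq
    obtain ⟨y, hy, rfl⟩ := hq
    have h2 := hdist y
    have hd : 0 ≤ dist (A + t • u) (A + y • v) := dist_nonneg
    nlinarith [sq_nonneg (t - 2 * y), mul_pos hr hr]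

private lemma keyBC (r : ℝ) (hr : 0 < r) (A B C : EuclideanSpace ℝ (Fin 2))
    (hAB : dist A B = 2 * Real.sqrt 3 * r) (hBC : dist B C = 2 * Real.sqrt 3 * r)
    (hCA : dist C A = 2 * Real.sqrt 3 * r)
    (t : ℝ) (ht0 : 0 ≤ t) (ht1 : t ≤ 1) :
    Metric.infDist (A + t • (B - A)) (segment ℝ B C) = 3 * r * (1 - t) := by
  have h := keyCA r hr B A C (by rw [dist_comm]; exact hAB) (by rw [dist_comm]; exact hCA)
    (by rw [dist_comm]; exact hBC) (1 - t) (by linarith) (by linarith)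
  have heq : B + (1 - t) • (A - B) = A + t • (B - A) := by
    module
  rw [heq, segment_symm] at h
  exact h

/-- In an equilateral triangle `A B C` of side length `2√3·r`
(`r > 0`) in the Euclidean plane, a point `p` of the side `[A,B]` is at distance at
least `r` from both other sides iff it lies within distance `r/√3` of the midpoint
of `[A,B]`; and at the two extreme points `midpoint(A,B) ± (r/√3)·(B−A)/‖B−A‖`
the distance to the nearer of the two other sides is exactly `r`. -/
theorem stmt8 (r : ℝ) (hr : 0 < r) (A B C : EuclideanSpace ℝ (Fin 2))
    (hAB : dist A B = 2 * Real.sqrt 3 * r) (hBC : dist B C = 2 * Real.sqrt 3 * r)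
    (hCA : dist C A = 2 * Real.sqrt 3 * r) :
    (∀ p ∈ segment ℝ A B,
      ((r ≤ Metric.infDist p (segment ℝ B C) ∧ r ≤ Metric.infDist p (segment ℝ C A)) ↔
        dist p (midpoint ℝ A B) ≤ r / Real.sqrt 3)) ∧
    (∀ ε : ℝ, (ε = 1 ∨ ε = -1) →
      ∀ p : EuclideanSpace ℝ (Fin 2),
        p = midpoint ℝ A B + ((ε * (r / Real.sqrt 3)) / ‖B - A‖) • (B - A) →
        min (Metric.infDist p (segment ℝ B C)) (Metric.infDist p (segment ℝ C A)) = r) := by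
  have hs3 : Real.sqrt 3 ^ 2 = 3 := Real.sq_sqrt (by norm_num)
  have hs3pos : 0 < Real.sqrt 3 := Real.sqrt_pos.mpr (by norm_num)
  have hBA : ‖B - A‖ = 2 * Real.sqrt 3 * r := by
    rw [← dist_eq_norm, dist_comm]; exact hAB
  have hmid : midpoint ℝ A B = A + (1/2 : ℝ) • (B - A) := by
    rw [midpoint_eq_smul_add]
    have h2 : (⅟2 : ℝ) = (1/2 : ℝ) := by norm_num
    rw [h2]
    module
  have hdmid : ∀ t : ℝ, dist (A + t • (B - A)) (midpoint ℝ A B)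
      = |t - 1/2| * (2 * Real.sqrt 3 * r) := by
    intro t
    rw [hmid, dist_eq_norm]
    have : A + t • (B - A) - (A + (1/2 : ℝ) • (B - A)) = (t - 1/2) • (B - A) := by
      rw [sub_smul]; abel
    rw [this, norm_smul, Real.norm_eq_abs, hBA]
  constructor
  · intro p hp
    rw [segment_eq_image'] at hp
    obtain ⟨t, ⟨ht0, ht1⟩, rfl⟩ := hp
    dsimp only
    rw [keyBC r hr A B C hAB hBC hCA t ht0 ht1,
        keyCA r hr A B C hAB hBC hCA t ht0 ht1, hdmid]
    constructor
    · rintro ⟨h1, h2⟩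
      have ht13 : 1/3 ≤ t := by nlinarith
      have ht23 : t ≤ 2/3 := by nlinarith
      have habs : |t - 1/2| ≤ 1/6 := abs_le.mpr ⟨by linarith, by linarith⟩
      calc |t - 1/2| * (2 * Real.sqrt 3 * r) ≤ 1/6 * (2 * Real.sqrt 3 * r) := by
            apply mul_le_mul_of_nonneg_right habs; positivity
        _ = r / Real.sqrt 3 := by
            rw [eq_div_iff (ne_of_gt hs3pos)]; linear_combination (r/3) * hs3
    · intro h
      have habs : |t - 1/2| ≤ 1/6 := by
        by_contra hc
        push_neg at hc
        have : 1/6 * (2 * Real.sqrt 3 * r) < |t - 1/2| * (2 * Real.sqrt 3 * r) := by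
          apply mul_lt_mul_of_pos_right hc; positivity
        have heq : 1/6 * (2 * Real.sqrt 3 * r) = r / Real.sqrt 3 := by
          rw [eq_div_iff (ne_of_gt hs3pos)]; linear_combination (r/3) * hs3
        linarith [heq ▸ this]
      rw [abs_le] at habs
      constructor <;> nlinarith [habs.1, habs.2]
  · intro ε hε p hp
    have hc : (ε * (r / Real.sqrt 3)) / ‖B - A‖ = ε / 6 := by
      rw [hBA]
      have hrs : r / Real.sqrt 3 = Real.sqrt 3 * r / 3 := by
        rw [div_eq_div_iff (ne_of_gt hs3pos) (by norm_num : (3:ℝ) ≠ 0)]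
        linear_combination (-r) * hs3
      rw [hrs, div_eq_iff (by positivity : (2 * Real.sqrt 3 * r) ≠ 0)]
      ring
    have hp' : p = A + (1/2 + ε/6) • (B - A) := by
      rw [hp, hc, hmid, add_smul]
      abel
    rcases hε with rfl | rfl
    · rw [hp']
      rw [keyBC r hr A B C hAB hBC hCA _ (by norm_num) (by norm_num),
          keyCA r hr A B C hAB hBC hCA _ (by norm_num) (by norm_num)]
      rw [show (3 : ℝ) * r * (1 - (1/2 + 1/6)) = r by ring,
          show (3 : ℝ) * r * (1/2 + 1/6) = 2 * r by ring]
      exact min_eq_left (by linarith)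
    · rw [hp']
      rw [keyBC r hr A B C hAB hBC hCA _ (by norm_num) (by norm_num),
          keyCA r hr A B C hAB hBC hCA _ (by norm_num) (by norm_num)]
      rw [show (3 : ℝ) * r * (1 - (1/2 + -1/6)) = 2 * r by ring,
          show (3 : ℝ) * r * (1/2 + -1/6) = r by ring]
      exact min_eq_right (by linarith)
end

section
/- Let r > 0 and let A, B, C be the vertices of an equilateral triangle in the Euclidean plane with side length 2√3·r. For ε ∈ {+1, −1}, define p₁ = midpoint(A,B) + ε·(r/√3)·(B−A)/‖B−A‖, p₂ = midpoint(B,C) + ε·(r/√3)·(C−B)/‖C−B‖, and p₃ = midpoint(C,A) + ε·(r/√3)·(A−C)/‖A−C‖. Then for both values of ε: dist(p₁,p₂) = dist(p₂,p₃) = dist(p₃,p₁) = 2r, and each pᵢ is at distance at least r from each of the two sides of the triangle not containing it (with equality r for exactly one of these two sides). -/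
open scoped RealInnerProductSpace

section Aux
variable {E : Type*} [NormedAddCommGroup E] [InnerProductSpace ℝ E]

private lemma inner_combo (u v : E) (a b c d U V W : ℝ)
    (hU : ⟪u, u⟫ = U) (hV : ⟪v, v⟫ = V) (hW : ⟪u, v⟫ = W) :
    ⟪a • u + b • v, c • u + d • v⟫ = a*c*U + (a*d + b*c)*W + b*d*V := by
  simp [inner_add_left, inner_add_right, inner_smul_left, inner_smul_right,
    real_inner_comm u v, hU, hV, hW]
  rw [← hU, ← hV, real_inner_self_eq_norm_sq, real_inner_self_eq_norm_sq]
  ring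

private lemma sq_eq_of_nonneg {a c : ℝ} (h : a^2 = c^2) (ha : 0 ≤ a) (hc : 0 ≤ c) : a = c := by
  nlinarith

private lemma infDist_seg_eq_s9 {p q Y Z : E} (hq : q ∈ segment ℝ Y Z)
    (h1 : ⟪p - q, Y - q⟫ = 0) (h2 : ⟪p - q, Z - q⟫ = 0) :
    Metric.infDist p (segment ℝ Y Z) = dist p q := by
  refine le_antisymm (Metric.infDist_le_dist_of_mem hq) ?_
  by_contra hc
  push_neg at hc
  obtain ⟨x, hx, hd⟩ := (Metric.infDist_lt_iff ⟨q, hq⟩).mp hc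
  obtain ⟨a, b, ha, hb, hab, rfl⟩ := hx
  have hx' : a • Y + b • Z - q = a • (Y - q) + b • (Z - q) := by
    have : q = (a + b) • q := by rw [hab, one_smul]
    rw [smul_sub, smul_sub]
    nth_rewrite 1 [this]
    module
  have horto : ⟪p - q, a • Y + b • Z - q⟫ = 0 := by
    rw [hx', inner_add_right, inner_smul_right, inner_smul_right, h1, h2]; ring
  have hdec : p - (a • Y + b • Z) = (p - q) - (a • Y + b • Z - q) := by abel
  have key : ‖p - q‖^2 ≤ ‖p - (a • Y + b • Z)‖^2 := by
    have expand := norm_sub_sq_real (p - q) (a • Y + b • Z - q)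
    rw [horto] at expand
    rw [hdec, expand]
    nlinarith [sq_nonneg ‖a • Y + b • Z - q‖]
  rw [dist_eq_norm, dist_eq_norm] at hd
  nlinarith [norm_nonneg (p - q), norm_nonneg (p - (a • Y + b • Z))]

/-- basic inner product data in the equilateral triangle -/
private lemma tri_inner {r : ℝ} {X Y Z : E}
    (hXY : dist X Y = 2 * Real.sqrt 3 * r) (hYZ : dist Y Z = 2 * Real.sqrt 3 * r)
    (hZX : dist Z X = 2 * Real.sqrt 3 * r) :
    ⟪Y - X, Y - X⟫ = 12*r^2 ∧ ⟪Z - Y, Z - Y⟫ = 12*r^2 ∧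
      ⟪Y - X, Z - Y⟫ = -6*r^2 := by
  have h3 : Real.sqrt 3 ^ 2 = 3 := Real.sq_sqrt (by norm_num)
  have hsq : (2 * Real.sqrt 3 * r)^2 = 12 * r^2 := by nlinarith
  have hu : ‖Y - X‖ ^ 2 = 12*r^2 := by
    rw [← dist_eq_norm, dist_comm, hXY]; exact hsq
  have hv : ‖Z - Y‖ ^ 2 = 12*r^2 := by
    rw [← dist_eq_norm, dist_comm, hYZ]; exact hsq
  have hw : ‖Y - X + (Z - Y)‖ ^ 2 = 12*r^2 := by
    have : Y - X + (Z - Y) = Z - X := by abel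
    rw [this, ← dist_eq_norm, hZX]; exact hsq
  rw [norm_add_sq_real, hu, hv] at hw
  refine ⟨by rw [real_inner_self_eq_norm_sq, hu], by rw [real_inner_self_eq_norm_sq, hv], by linarith⟩

private lemma lemA {r t : ℝ} (hr : 0 ≤ r) (ht : 1 - 3*t + 3*t^2 = 1/3) (X Y Z : E)
    (hXY : dist X Y = 2 * Real.sqrt 3 * r) (hYZ : dist Y Z = 2 * Real.sqrt 3 * r)
    (hZX : dist Z X = 2 * Real.sqrt 3 * r) :
    dist (X + t • (Y - X)) (Y + t • (Z - Y)) = 2 * r := by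
  obtain ⟨hU, hV, hW⟩ := tri_inner hXY hYZ hZX
  have hvec : (X + t • (Y - X)) - (Y + t • (Z - Y))
      = (t - 1) • (Y - X) + (-t) • (Z - Y) := by module
  have hn : ‖(X + t • (Y - X)) - (Y + t • (Z - Y))‖^2 = (2*r)^2 := by
    rw [← real_inner_self_eq_norm_sq, hvec, inner_combo _ _ _ _ _ _ _ _ _ hU hV hW]
    nlinarith
  rw [dist_eq_norm]
  exact sq_eq_of_nonneg hn (norm_nonneg _) (by linarith)

private lemma lemB {r t : ℝ} (hr : 0 ≤ r) (ht0 : 0 ≤ t) (ht1 : t ≤ 1) (X Y Z : E)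
    (hXY : dist X Y = 2 * Real.sqrt 3 * r) (hYZ : dist Y Z = 2 * Real.sqrt 3 * r)
    (hZX : dist Z X = 2 * Real.sqrt 3 * r) :
    Metric.infDist (X + t • (Y - X)) (segment ℝ Y Z) = 3*(1-t)*r ∧
      Metric.infDist (X + t • (Y - X)) (segment ℝ Z X) = 3*t*r := by
  obtain ⟨hU, hV, hW⟩ := tri_inner hXY hYZ hZX
  set p := X + t • (Y - X) with hp
  constructor
  · set q := Y + ((1-t)/2) • (Z - Y) with hq
    have hmem : q ∈ segment ℝ Y Z :=
      ⟨1 - (1-t)/2, (1-t)/2, by linarith, by linarith, by ring, by rw [hq]; module⟩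
    have hpq : p - q = (t - 1) • (Y - X) + (-((1-t)/2)) • (Z - Y) := by
      rw [hp, hq]; module
    have hperp : ⟪p - q, Z - Y⟫ = 0 := by
      have hZY : (Z - Y) = (0:ℝ) • (Y - X) + (1:ℝ) • (Z - Y) := by module
      rw [hpq]
      nth_rewrite 2 [hZY]
      rw [inner_combo _ _ _ _ _ _ _ _ _ hU hV hW]; ring
    have h1 : ⟪p - q, Y - q⟫ = 0 := by
      have : Y - q = (-((1-t)/2)) • (Z - Y) := by rw [hq]; module
      rw [this, inner_smul_right, hperp]; ring
    have h2 : ⟪p - q, Z - q⟫ = 0 := by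
      have : Z - q = (1 - (1-t)/2) • (Z - Y) := by rw [hq]; module
      rw [this, inner_smul_right, hperp]; ring
    rw [infDist_seg_eq_s9 hmem h1 h2, dist_eq_norm]
    have hn : ‖p - q‖^2 = (3*(1-t)*r)^2 := by
      rw [← real_inner_self_eq_norm_sq, hpq, inner_combo _ _ _ _ _ _ _ _ _ hU hV hW]
      nlinarith
    exact sq_eq_of_nonneg hn (norm_nonneg _) (by nlinarith)
  · set q := Z + (1 - t/2) • (X - Z) with hq
    have hmem : q ∈ segment ℝ Z X :=
      ⟨t/2, 1 - t/2, by linarith, by linarith, by ring, by rw [hq]; module⟩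
    have hpq : p - q = (t/2) • (Y - X) + (-(t/2)) • (Z - Y) := by
      rw [hp, hq]; module
    have hperp : ⟪p - q, X - Z⟫ = 0 := by
      have hXZ : (X - Z) = (-1:ℝ) • (Y - X) + (-1:ℝ) • (Z - Y) := by module
      rw [hpq, hXZ]
      rw [inner_combo _ _ _ _ _ _ _ _ _ hU hV hW]; ring
    have h1 : ⟪p - q, Z - q⟫ = 0 := by
      have : Z - q = (-(1 - t/2)) • (X - Z) := by rw [hq]; module
      rw [this, inner_smul_right, hperp]; ring
    have h2 : ⟪p - q, X - q⟫ = 0 := by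
      have : X - q = (t/2) • (X - Z) := by rw [hq]; module
      rw [this, inner_smul_right, hperp]; ring
    rw [infDist_seg_eq_s9 hmem h1 h2, dist_eq_norm]
    have hn : ‖p - q‖^2 = (3*t*r)^2 := by
      rw [← real_inner_self_eq_norm_sq, hpq, inner_combo _ _ _ _ _ _ _ _ _ hU hV hW]
      nlinarith
    exact sq_eq_of_nonneg hn (norm_nonneg _) (by nlinarith)

end Aux

set_option maxHeartbeats 1000000

/-- The two placements (solid: `ε = 1`, dashed: `ε = -1`) of the
triangle-block gadget: in an equilateral triangle `A B C` of side length `2√3·r`,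
the points `p₁ = midpoint(A,B) + ε·(r/√3)·(B−A)/‖B−A‖`,
`p₂ = midpoint(B,C) + ε·(r/√3)·(C−B)/‖C−B‖`,
`p₃ = midpoint(C,A) + ε·(r/√3)·(A−C)/‖A−C‖` are pairwise at distance exactly `2r`,
and each `pᵢ` is at distance at least `r` from each of the two sides of the triangle
not containing it, with equality `r` for exactly one of those two sides. -/
theorem stmt9 (r : ℝ) (hr : 0 < r) (A B C : EuclideanSpace ℝ (Fin 2))
    (hAB : dist A B = 2 * Real.sqrt 3 * r) (hBC : dist B C = 2 * Real.sqrt 3 * r)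
    (hCA : dist C A = 2 * Real.sqrt 3 * r)
    (ε : ℝ) (hε : ε = 1 ∨ ε = -1)
    (p₁ p₂ p₃ : EuclideanSpace ℝ (Fin 2))
    (hp₁ : p₁ = midpoint ℝ A B + ((ε * (r / Real.sqrt 3)) / ‖B - A‖) • (B - A))
    (hp₂ : p₂ = midpoint ℝ B C + ((ε * (r / Real.sqrt 3)) / ‖C - B‖) • (C - B))
    (hp₃ : p₃ = midpoint ℝ C A + ((ε * (r / Real.sqrt 3)) / ‖A - C‖) • (A - C)) :
    (dist p₁ p₂ = 2 * r ∧ dist p₂ p₃ = 2 * r ∧ dist p₃ p₁ = 2 * r) ∧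
    (r ≤ Metric.infDist p₁ (segment ℝ B C) ∧ r ≤ Metric.infDist p₁ (segment ℝ C A) ∧
      ((Metric.infDist p₁ (segment ℝ B C) = r ∧ Metric.infDist p₁ (segment ℝ C A) ≠ r) ∨
       (Metric.infDist p₁ (segment ℝ B C) ≠ r ∧ Metric.infDist p₁ (segment ℝ C A) = r))) ∧
    (r ≤ Metric.infDist p₂ (segment ℝ C A) ∧ r ≤ Metric.infDist p₂ (segment ℝ A B) ∧
      ((Metric.infDist p₂ (segment ℝ C A) = r ∧ Metric.infDist p₂ (segment ℝ A B) ≠ r) ∨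
       (Metric.infDist p₂ (segment ℝ C A) ≠ r ∧ Metric.infDist p₂ (segment ℝ A B) = r))) ∧
    (r ≤ Metric.infDist p₃ (segment ℝ A B) ∧ r ≤ Metric.infDist p₃ (segment ℝ B C) ∧
      ((Metric.infDist p₃ (segment ℝ A B) = r ∧ Metric.infDist p₃ (segment ℝ B C) ≠ r) ∨
       (Metric.infDist p₃ (segment ℝ A B) ≠ r ∧ Metric.infDist p₃ (segment ℝ B C) = r))) := by
  have h3 : Real.sqrt 3 ^ 2 = 3 := Real.sq_sqrt (by norm_num)
  have h3ne : Real.sqrt 3 ≠ 0 := by positivity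
  have hnBA : ‖B - A‖ = 2 * Real.sqrt 3 * r := by rw [← dist_eq_norm, dist_comm]; exact hAB
  have hnCB : ‖C - B‖ = 2 * Real.sqrt 3 * r := by rw [← dist_eq_norm, dist_comm]; exact hBC
  have hnAC : ‖A - C‖ = 2 * Real.sqrt 3 * r := by rw [← dist_eq_norm, dist_comm]; exact hCA
  have hhalf : (⅟2 : ℝ) = 1/2 := by norm_num
  have hden : (2 * Real.sqrt 3 * r) ≠ 0 := by positivity
  have hcoef : (ε * (r / Real.sqrt 3)) / (2 * Real.sqrt 3 * r) = ε/6 := by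
    rw [div_eq_div_iff hden (by norm_num)]
    field_simp
    linear_combination (-2 * ε) * h3
  have hq₁ : p₁ = A + (1/2 + ε/6) • (B - A) := by
    rw [hp₁, hnBA, hcoef, midpoint_eq_smul_add, hhalf]; module
  have hq₂ : p₂ = B + (1/2 + ε/6) • (C - B) := by
    rw [hp₂, hnCB, hcoef, midpoint_eq_smul_add, hhalf]; module
  have hq₃ : p₃ = C + (1/2 + ε/6) • (A - C) := by
    rw [hp₃, hnAC, hcoef, midpoint_eq_smul_add, hhalf]; module
  obtain ⟨t, htε, ht0, ht1, htA, hcase⟩ :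
      ∃ t : ℝ, (1:ℝ)/2 + ε/6 = t ∧ 0 ≤ t ∧ t ≤ 1 ∧ 1 - 3*t + 3*t^2 = 1/3 ∧
        (t = 2/3 ∨ t = 1/3) := by
    rcases hε with rfl | rfl
    · exact ⟨2/3, by norm_num, by norm_num, by norm_num, by norm_num, Or.inl rfl⟩
    · exact ⟨1/3, by norm_num, by norm_num, by norm_num, by norm_num, Or.inr rfl⟩
  rw [htε] at hq₁ hq₂ hq₃
  have d12 := lemA hr.le htA A B C hAB hBC hCA
  have d23 := lemA hr.le htA B C A hBC hCA hAB
  have d31 := lemA hr.le htA C A B hCA hAB hBC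
  rw [← hq₁, ← hq₂] at d12
  rw [← hq₂, ← hq₃] at d23
  rw [← hq₃, ← hq₁] at d31
  have i1 := lemB hr.le ht0 ht1 A B C hAB hBC hCA
  have i2 := lemB hr.le ht0 ht1 B C A hBC hCA hAB
  have i3 := lemB hr.le ht0 ht1 C A B hCA hAB hBC
  rw [← hq₁] at i1
  rw [← hq₂] at i2
  rw [← hq₃] at i3
  have pack : ∀ d₁ d₂ : ℝ, d₁ = 3*(1-t)*r → d₂ = 3*t*r →
      (r ≤ d₁ ∧ r ≤ d₂ ∧ ((d₁ = r ∧ d₂ ≠ r) ∨ (d₁ ≠ r ∧ d₂ = r))) := by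
    rintro d₁ d₂ rfl rfl
    rcases hcase with rfl | rfl
    · exact ⟨by linarith, by linarith,
        Or.inl ⟨by ring, by intro h; nlinarith⟩⟩
    · exact ⟨by linarith, by linarith,
        Or.inr ⟨by intro h; nlinarith, by ring⟩⟩
  exact ⟨⟨d12, d23, d31⟩, pack _ _ i1.1 i1.2, pack _ _ i2.1 i2.2, pack _ _ i3.1 i3.2⟩
end

section
/- Let r > 0 and let A, B, C be the vertices of an equilateral triangle in the Euclidean plane with side length 2√3·r. Consider triples (p₁, p₂, p₃) with p₁ ∈ [A,B], p₂ ∈ [B,C], p₃ ∈ [C,A], such that each pᵢ is at distance at least r from each of the two sides of the triangle not containing it, and dist(pᵢ, pⱼ) ≥ 2r for all i ≠ j. Then there are exactly two such triples, namely the triples p₁ = midpoint(A,B) + ε·(r/√3)·(B−A)/‖B−A‖, p₂ = midpoint(B,C) + ε·(r/√3)·(C−B)/‖C−B‖, p₃ = midpoint(C,A) + ε·(r/√3)·(A−C)/‖A−C‖ for ε = +1 and for ε = −1. -/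
section Helpers

variable {E : Type*} [NormedAddCommGroup E] [InnerProductSpace ℝ E]

private lemma normsq_combo {u v : E} {s : ℝ} (hu : ‖u‖ = s) (hv : ‖v‖ = s)
    (huv : ‖u - v‖ = s) (a b : ℝ) :
    ‖a • u + b • v‖ ^ 2 = (a ^ 2 + a * b + b ^ 2) * s ^ 2 := by
  have hiuv : inner ℝ u v = s ^ 2 / 2 := by
    have h := norm_sub_sq_real u v
    rw [hu, hv, huv] at h; linarith
  have h1 : inner ℝ u u = s ^ 2 := by rw [real_inner_self_eq_norm_sq, hu]
  have h2 : inner ℝ v v = s ^ 2 := by rw [real_inner_self_eq_norm_sq, hv]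
  have hvu : inner ℝ v u = s ^ 2 / 2 := by rw [real_inner_comm]; exact hiuv
  have e : ‖a • u + b • v‖ ^ 2 = inner ℝ (a • u + b • v) (a • u + b • v) :=
    (real_inner_self_eq_norm_sq _).symm
  rw [e]
  simp only [inner_add_left, inner_add_right, real_inner_smul_left, real_inner_smul_right,
    h1, h2, hiuv, hvu]
  ring

private lemma dsq {u v : E} {s : ℝ} (hu : ‖u‖ = s) (hv : ‖v‖ = s) (huv : ‖u - v‖ = s)
    (A : E) (a b c d : ℝ) :
    dist (A + (a • u + b • v)) (A + (c • u + d • v)) ^ 2 =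
      ((a - c) ^ 2 + (a - c) * (b - d) + (b - d) ^ 2) * s ^ 2 := by
  rw [dist_add_left, dist_eq_norm]
  have h : (a • u + b • v) - (c • u + d • v) = (a - c) • u + (b - d) • v := by module
  rw [h, normsq_combo hu hv huv]

end Helpers

private lemma quadε (ε c : ℝ) (hε2 : ε ^ 2 = 1) (hε1 : -1 ≤ ε) (hc0 : 0 ≤ c) (hc1 : c ≤ 1) :
    1 / 12 ≤ (1 / 2 + ε / 6) ^ 2 - (1 / 2 + ε / 6) * c + c ^ 2 := by
  nlinarith [sq_nonneg (c - (1 / 2 + ε / 6) / 2)]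

private lemma side_bound {r t d : ℝ} (hr : 0 < r) (ht0 : 0 ≤ t) (hd0 : 0 ≤ d)
    (hd2 : d ^ 2 = 9 * t ^ 2 * r ^ 2) (hrd : r ≤ d) : 1 / 3 ≤ t := by
  have h1 : r ^ 2 ≤ d ^ 2 := by nlinarith
  have h2 : 1 ≤ 9 * t ^ 2 := by nlinarith [mul_pos hr hr]
  nlinarith [h2, ht0]

private lemma pair_bound {r d En : ℝ} (hr : 0 < r) (hd0 : 0 ≤ d)
    (hd2 : d ^ 2 = En * (12 * r ^ 2)) (hrd : 2 * r ≤ d) : 1 / 3 ≤ En := by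
  have h1 : (2 * r) ^ 2 ≤ d ^ 2 := by nlinarith
  nlinarith [mul_pos hr hr]

private lemma pair_eq {r d : ℝ} (hr : 0 < r) (hd0 : 0 ≤ d) (hd2 : d ^ 2 = 4 * r ^ 2) :
    2 * r ≤ d := by nlinarith

private lemma dist_lb {r d : ℝ} (hr : 0 < r) (hd0 : 0 ≤ d) (h : r ^ 2 ≤ d ^ 2) : r ≤ d := by
  nlinarith

private lemma le_infDist_of {α : Type*} [PseudoMetricSpace α] {x : α} {s : Set α} {r : ℝ}
    (hne : s.Nonempty) (h : ∀ y ∈ s, r ≤ dist x y) : r ≤ Metric.infDist x s := by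
  by_contra hc
  push_neg at hc
  obtain ⟨y, hy, hdy⟩ := (Metric.infDist_lt_iff hne).1 hc
  exact absurd hdy (not_lt.2 (h y hy))

set_option maxHeartbeats 1000000 in
private lemma alg (x y z : ℝ) (hx1 : 1/3 ≤ x) (hx2 : x ≤ 2/3) (hy1 : 1/3 ≤ y) (hy2 : y ≤ 2/3)
    (hz1 : 1/3 ≤ z) (hz2 : z ≤ 2/3)
    (h1 : 1/3 ≤ (1-x)^2 - (1-x)*y + y^2)
    (h2 : 1/3 ≤ (1-y)^2 - (1-y)*z + z^2)
    (h3 : 1/3 ≤ (1-z)^2 - (1-z)*x + x^2) :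
    (x = 2/3 ∧ y = 2/3 ∧ z = 2/3) ∨ (x = 1/3 ∧ y = 1/3 ∧ z = 1/3) := by
  have hbx : 0 ≤ (2/3 - x) * (x - 1/3) := mul_nonneg (by linarith) (by linarith)
  have hby : 0 ≤ (2/3 - y) * (y - 1/3) := mul_nonneg (by linarith) (by linarith)
  have hbz : 0 ≤ (2/3 - z) * (z - 1/3) := mul_nonneg (by linarith) (by linarith)
  have key : (x-y)^2 + (y-z)^2 + (z-x)^2
      + 6*((2/3-x)*(x-1/3) + (2/3-y)*(y-1/3) + (2/3-z)*(z-1/3)) ≤ 0 := by linarith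
  have hxy0 : (x - y)^2 = 0 :=
    le_antisymm (by linarith [sq_nonneg (y-z), sq_nonneg (z-x)]) (sq_nonneg _)
  have hyz0 : (y - z)^2 = 0 :=
    le_antisymm (by linarith [sq_nonneg (x-y), sq_nonneg (z-x)]) (sq_nonneg _)
  have hxy : x = y := by
    have h' : x - y = 0 := pow_eq_zero_iff two_ne_zero |>.1 hxy0
    linarith
  have hyz : y = z := by
    have h' : y - z = 0 := pow_eq_zero_iff two_ne_zero |>.1 hyz0
    linarith
  subst hxy; subst hyz
  have hx0 : (2/3 - x) * (x - 1/3) = 0 := le_antisymm (by linarith) hbx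
  rcases mul_eq_zero.1 hx0 with h | h
  · left
    refine ⟨by linarith, by linarith, by linarith⟩
  · right
    refine ⟨by linarith, by linarith, by linarith⟩

set_option maxHeartbeats 1600000 in
/-- The triangle-block gadget admits exactly two valid placements:
in an equilateral triangle `A B C` of side length `2√3·r`, a triple
`(p₁, p₂, p₃)` with `p₁ ∈ [A,B]`, `p₂ ∈ [B,C]`, `p₃ ∈ [C,A]`, each `pᵢ` at distance
at least `r` from the two sides not containing it, and pairwise distances at least
`2r`, exists precisely for
`pᵢ = midpoint ± (r/√3)·(unit direction of its side)` with a common sign `ε = ±1`. -/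
theorem stmt10 (r : ℝ) (hr : 0 < r) (A B C : EuclideanSpace ℝ (Fin 2))
    (hAB : dist A B = 2 * Real.sqrt 3 * r) (hBC : dist B C = 2 * Real.sqrt 3 * r)
    (hCA : dist C A = 2 * Real.sqrt 3 * r)
    (p₁ p₂ p₃ : EuclideanSpace ℝ (Fin 2)) :
    (p₁ ∈ segment ℝ A B ∧ p₂ ∈ segment ℝ B C ∧ p₃ ∈ segment ℝ C A ∧
      r ≤ Metric.infDist p₁ (segment ℝ B C) ∧ r ≤ Metric.infDist p₁ (segment ℝ C A) ∧
      r ≤ Metric.infDist p₂ (segment ℝ C A) ∧ r ≤ Metric.infDist p₂ (segment ℝ A B) ∧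
      r ≤ Metric.infDist p₃ (segment ℝ A B) ∧ r ≤ Metric.infDist p₃ (segment ℝ B C) ∧
      2 * r ≤ dist p₁ p₂ ∧ 2 * r ≤ dist p₂ p₃ ∧ 2 * r ≤ dist p₃ p₁) ↔
    (∃ ε : ℝ, (ε = 1 ∨ ε = -1) ∧
      p₁ = midpoint ℝ A B + ((ε * (r / Real.sqrt 3)) / ‖B - A‖) • (B - A) ∧
      p₂ = midpoint ℝ B C + ((ε * (r / Real.sqrt 3)) / ‖C - B‖) • (C - B) ∧
      p₃ = midpoint ℝ C A + ((ε * (r / Real.sqrt 3)) / ‖A - C‖) • (A - C)) := by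
  have h3pos : (0:ℝ) < Real.sqrt 3 := Real.sqrt_pos.2 (by norm_num)
  have h33 : Real.sqrt 3 * Real.sqrt 3 = 3 := Real.mul_self_sqrt (by norm_num)
  set s : ℝ := 2 * Real.sqrt 3 * r with hs_def
  have hs_pos : 0 < s := by positivity
  have hs2 : s ^ 2 = 12 * r ^ 2 := by
    rw [hs_def]; linear_combination (4 * r ^ 2) * h33
  have hu : ‖B - A‖ = s := by rw [← dist_eq_norm, dist_comm]; exact hAB
  have hv : ‖C - A‖ = s := by rw [← dist_eq_norm]; exact hCA
  have huv : ‖(B - A) - (C - A)‖ = s := by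
    have h : (B - A) - (C - A) = B - C := by abel
    rw [h, ← dist_eq_norm]; exact hBC
  have hcb : ‖C - B‖ = s := by rw [← dist_eq_norm, dist_comm]; exact hBC
  have hac : ‖A - C‖ = s := by rw [← dist_eq_norm, dist_comm]; exact hCA
  have hco : ∀ ε : ℝ, ε * (r / Real.sqrt 3) / s = ε / 6 := by
    intro ε
    rw [hs_def]
    field_simp
    linear_combination (-2 * ε) * h33
  have hmid : ∀ X Y : EuclideanSpace ℝ (Fin 2), midpoint ℝ X Y = (2⁻¹ : ℝ) • (X + Y) :=
    fun X Y => by rw [midpoint_eq_smul_add, invOf_eq_inv]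
  have hm1 : ∀ ε : ℝ, midpoint ℝ A B + ((ε * (r / Real.sqrt 3)) / ‖B - A‖) • (B - A)
      = A + ((1/2 + ε/6) • (B - A) + (0:ℝ) • (C - A)) := by
    intro ε; rw [hu, hco ε, hmid]; module
  have hm2 : ∀ ε : ℝ, midpoint ℝ B C + ((ε * (r / Real.sqrt 3)) / ‖C - B‖) • (C - B)
      = A + ((1/2 - ε/6) • (B - A) + (1/2 + ε/6) • (C - A)) := by
    intro ε; rw [hcb, hco ε, hmid]; module
  have hm3 : ∀ ε : ℝ, midpoint ℝ C A + ((ε * (r / Real.sqrt 3)) / ‖A - C‖) • (A - C)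
      = A + ((0:ℝ) • (B - A) + (1/2 - ε/6) • (C - A)) := by
    intro ε; rw [hac, hco ε, hmid]; module
  constructor
  · rintro ⟨hmem1, hmem2, hmem3, h1BC, h1CA, h2CA, h2AB, h3AB, h3BC, hd12, hd23, hd31⟩
    rw [segment_eq_image'] at hmem1 hmem2 hmem3
    obtain ⟨t₁, ht₁, rfl⟩ := hmem1
    obtain ⟨t₂, ht₂, rfl⟩ := hmem2
    obtain ⟨t₃, ht₃, rfl⟩ := hmem3
    simp only [Set.mem_Icc] at ht₁ ht₂ ht₃
    beta_reduce at h1BC h1CA h2CA h2AB h3AB h3BC hd12 hd23 hd31 ⊢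
    have n1 : A + t₁ • (B - A) = A + (t₁ • (B - A) + (0:ℝ) • (C - A)) := by module
    have n2 : B + t₂ • (C - B) = A + ((1 - t₂) • (B - A) + t₂ • (C - A)) := by module
    have n3 : C + t₃ • (A - C) = A + ((0:ℝ) • (B - A) + (1 - t₃) • (C - A)) := by module
    -- t₁ ≥ 1/3
    have hb1 : 1/3 ≤ t₁ := by
      have hqm : C + (1 - t₁/2) • (A - C) ∈ segment ℝ C A := by
        rw [segment_eq_image']
        exact ⟨1 - t₁/2, ⟨by linarith [ht₁.2], by linarith [ht₁.1]⟩, rfl⟩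
      have e2 : C + (1 - t₁/2) • (A - C) = A + ((0:ℝ) • (B - A) + (t₁/2) • (C - A)) := by
        module
      have hd2 : dist (A + (t₁ • (B - A) + (0:ℝ) • (C - A)))
          (A + ((0:ℝ) • (B - A) + (t₁/2) • (C - A))) ^ 2 = 9 * t₁ ^ 2 * r ^ 2 := by
        rw [dsq hu hv huv, hs2]; ring
      have hrd : r ≤ dist (A + (t₁ • (B - A) + (0:ℝ) • (C - A)))
          (A + ((0:ℝ) • (B - A) + (t₁/2) • (C - A))) := by
        rw [← n1, ← e2]
        exact le_trans h1CA (Metric.infDist_le_dist_of_mem hqm)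
      exact side_bound hr ht₁.1 dist_nonneg hd2 hrd
    -- t₁ ≤ 2/3
    have hb2 : t₁ ≤ 2/3 := by
      have hqm : B + ((1 - t₁)/2) • (C - B) ∈ segment ℝ B C := by
        rw [segment_eq_image']
        exact ⟨(1 - t₁)/2, ⟨by linarith [ht₁.2], by linarith [ht₁.1]⟩, rfl⟩
      have e2 : B + ((1 - t₁)/2) • (C - B)
          = A + (((1 + t₁)/2) • (B - A) + ((1 - t₁)/2) • (C - A)) := by module
      have hd2 : dist (A + (t₁ • (B - A) + (0:ℝ) • (C - A)))
          (A + (((1 + t₁)/2) • (B - A) + ((1 - t₁)/2) • (C - A))) ^ 2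
          = 9 * (1 - t₁) ^ 2 * r ^ 2 := by
        rw [dsq hu hv huv, hs2]; ring
      have hrd : r ≤ dist (A + (t₁ • (B - A) + (0:ℝ) • (C - A)))
          (A + (((1 + t₁)/2) • (B - A) + ((1 - t₁)/2) • (C - A))) := by
        rw [← n1, ← e2]
        exact le_trans h1BC (Metric.infDist_le_dist_of_mem hqm)
      have := side_bound hr (by linarith [ht₁.2]) dist_nonneg hd2 hrd
      linarith
    -- t₂ ≥ 1/3
    have hb3 : 1/3 ≤ t₂ := by
      have hqm : A + (1 - t₂/2) • (B - A) ∈ segment ℝ A B := by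
        rw [segment_eq_image']
        exact ⟨1 - t₂/2, ⟨by linarith [ht₂.2], by linarith [ht₂.1]⟩, rfl⟩
      have e2 : A + (1 - t₂/2) • (B - A)
          = A + ((1 - t₂/2) • (B - A) + (0:ℝ) • (C - A)) := by module
      have hd2 : dist (A + ((1 - t₂) • (B - A) + t₂ • (C - A)))
          (A + ((1 - t₂/2) • (B - A) + (0:ℝ) • (C - A))) ^ 2 = 9 * t₂ ^ 2 * r ^ 2 := by
        rw [dsq hu hv huv, hs2]; ring
      have hrd : r ≤ dist (A + ((1 - t₂) • (B - A) + t₂ • (C - A)))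
          (A + ((1 - t₂/2) • (B - A) + (0:ℝ) • (C - A))) := by
        rw [← n2, ← e2]
        exact le_trans h2AB (Metric.infDist_le_dist_of_mem hqm)
      exact side_bound hr ht₂.1 dist_nonneg hd2 hrd
    -- t₂ ≤ 2/3
    have hb4 : t₂ ≤ 2/3 := by
      have hqm : C + ((1 - t₂)/2) • (A - C) ∈ segment ℝ C A := by
        rw [segment_eq_image']
        exact ⟨(1 - t₂)/2, ⟨by linarith [ht₂.2], by linarith [ht₂.1]⟩, rfl⟩
      have e2 : C + ((1 - t₂)/2) • (A - C)
          = A + ((0:ℝ) • (B - A) + ((1 + t₂)/2) • (C - A)) := by module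
      have hd2 : dist (A + ((1 - t₂) • (B - A) + t₂ • (C - A)))
          (A + ((0:ℝ) • (B - A) + ((1 + t₂)/2) • (C - A))) ^ 2
          = 9 * (1 - t₂) ^ 2 * r ^ 2 := by
        rw [dsq hu hv huv, hs2]; ring
      have hrd : r ≤ dist (A + ((1 - t₂) • (B - A) + t₂ • (C - A)))
          (A + ((0:ℝ) • (B - A) + ((1 + t₂)/2) • (C - A))) := by
        rw [← n2, ← e2]
        exact le_trans h2CA (Metric.infDist_le_dist_of_mem hqm)
      have := side_bound hr (by linarith [ht₂.2]) dist_nonneg hd2 hrd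
      linarith
    -- t₃ ≥ 1/3
    have hb5 : 1/3 ≤ t₃ := by
      have hqm : B + ((2 - t₃)/2) • (C - B) ∈ segment ℝ B C := by
        rw [segment_eq_image']
        exact ⟨(2 - t₃)/2, ⟨by linarith [ht₃.2], by linarith [ht₃.1]⟩, rfl⟩
      have e2 : B + ((2 - t₃)/2) • (C - B)
          = A + ((t₃/2) • (B - A) + ((2 - t₃)/2) • (C - A)) := by module
      have hd2 : dist (A + ((0:ℝ) • (B - A) + (1 - t₃) • (C - A)))
          (A + ((t₃/2) • (B - A) + ((2 - t₃)/2) • (C - A))) ^ 2 = 9 * t₃ ^ 2 * r ^ 2 := by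
        rw [dsq hu hv huv, hs2]; ring
      have hrd : r ≤ dist (A + ((0:ℝ) • (B - A) + (1 - t₃) • (C - A)))
          (A + ((t₃/2) • (B - A) + ((2 - t₃)/2) • (C - A))) := by
        rw [← n3, ← e2]
        exact le_trans h3BC (Metric.infDist_le_dist_of_mem hqm)
      exact side_bound hr ht₃.1 dist_nonneg hd2 hrd
    -- t₃ ≤ 2/3
    have hb6 : t₃ ≤ 2/3 := by
      have hqm : A + ((1 - t₃)/2) • (B - A) ∈ segment ℝ A B := by
        rw [segment_eq_image']
        exact ⟨(1 - t₃)/2, ⟨by linarith [ht₃.2], by linarith [ht₃.1]⟩, rfl⟩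
      have e2 : A + ((1 - t₃)/2) • (B - A)
          = A + (((1 - t₃)/2) • (B - A) + (0:ℝ) • (C - A)) := by module
      have hd2 : dist (A + ((0:ℝ) • (B - A) + (1 - t₃) • (C - A)))
          (A + (((1 - t₃)/2) • (B - A) + (0:ℝ) • (C - A))) ^ 2
          = 9 * (1 - t₃) ^ 2 * r ^ 2 := by
        rw [dsq hu hv huv, hs2]; ring
      have hrd : r ≤ dist (A + ((0:ℝ) • (B - A) + (1 - t₃) • (C - A)))
          (A + (((1 - t₃)/2) • (B - A) + (0:ℝ) • (C - A))) := by
        rw [← n3, ← e2]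
        exact le_trans h3AB (Metric.infDist_le_dist_of_mem hqm)
      have := side_bound hr (by linarith [ht₃.2]) dist_nonneg hd2 hrd
      linarith
    -- pairwise bounds
    rw [n1] at hd12 hd31
    rw [n2] at hd12 hd23
    rw [n3] at hd23 hd31
    have hE12 : 1/3 ≤ (1 - t₁)^2 - (1 - t₁)*t₂ + t₂^2 := by
      refine pair_bound hr dist_nonneg ?_ hd12
      rw [dsq hu hv huv, hs2]; ring
    have hE23 : 1/3 ≤ (1 - t₂)^2 - (1 - t₂)*t₃ + t₃^2 := by
      refine pair_bound hr dist_nonneg ?_ hd23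
      rw [dsq hu hv huv, hs2]; ring
    have hE31 : 1/3 ≤ (1 - t₃)^2 - (1 - t₃)*t₁ + t₁^2 := by
      refine pair_bound hr dist_nonneg ?_ hd31
      rw [dsq hu hv huv, hs2]; ring
    rcases alg t₁ t₂ t₃ hb1 hb2 hb3 hb4 hb5 hb6 hE12 hE23 hE31 with
      ⟨he1, he2, he3⟩ | ⟨he1, he2, he3⟩
    · refine ⟨1, Or.inl rfl, ?_, ?_, ?_⟩
      · rw [hm1 1, he1]; module
      · rw [hm2 1, he2]; module
      · rw [hm3 1, he3]; module
    · refine ⟨-1, Or.inr rfl, ?_, ?_, ?_⟩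
      · rw [hm1 (-1), he1]; module
      · rw [hm2 (-1), he2]; module
      · rw [hm3 (-1), he3]; module
  · rintro ⟨ε, hε, hp1, hp2, hp3⟩
    have hεl : -1 ≤ ε := by rcases hε with rfl | rfl <;> norm_num
    have hεu : ε ≤ 1 := by rcases hε with rfl | rfl <;> norm_num
    have hε2 : ε ^ 2 = 1 := by rcases hε with rfl | rfl <;> norm_num
    have hε2' : (-ε) ^ 2 = 1 := by linear_combination hε2
    have hεl' : -1 ≤ -ε := by linarith
    rw [hm1 ε] at hp1
    rw [hm2 ε] at hp2
    rw [hm3 ε] at hp3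
    subst hp1; subst hp2; subst hp3
    refine ⟨?_, ?_, ?_, ?_, ?_, ?_, ?_, ?_, ?_, ?_, ?_, ?_⟩
    · rw [segment_eq_image']
      refine ⟨1/2 + ε/6, ⟨by linarith, by linarith⟩, ?_⟩
      show A + (1/2 + ε/6) • (B - A) = _
      module
    · rw [segment_eq_image']
      refine ⟨1/2 + ε/6, ⟨by linarith, by linarith⟩, ?_⟩
      show B + (1/2 + ε/6) • (C - B) = _
      module
    · rw [segment_eq_image']
      refine ⟨1/2 + ε/6, ⟨by linarith, by linarith⟩, ?_⟩
      show C + (1/2 + ε/6) • (A - C) = _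
      module
    -- r ≤ infDist p₁ (segment B C)
    · refine le_infDist_of ⟨B, left_mem_segment ℝ B C⟩ ?_
      intro q hq
      rw [segment_eq_image'] at hq
      obtain ⟨θ, hθ, rfl⟩ := hq
      simp only [Set.mem_Icc] at hθ
      apply dist_lb hr dist_nonneg
      show r ^ 2 ≤ dist _ (B + θ • (C - B)) ^ 2
      have e2 : B + θ • (C - B) = A + ((1 - θ) • (B - A) + θ • (C - A)) := by module
      rw [e2, dsq hu hv huv, hs2]
      nlinarith [quadε (-ε) θ hε2' (by linarith) hθ.1 hθ.2, mul_pos hr hr]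
    -- r ≤ infDist p₁ (segment C A)
    · refine le_infDist_of ⟨C, left_mem_segment ℝ C A⟩ ?_
      intro q hq
      rw [segment_eq_image'] at hq
      obtain ⟨θ, hθ, rfl⟩ := hq
      simp only [Set.mem_Icc] at hθ
      apply dist_lb hr dist_nonneg
      show r ^ 2 ≤ dist _ (C + θ • (A - C)) ^ 2
      have e2 : C + θ • (A - C) = A + ((0:ℝ) • (B - A) + (1 - θ) • (C - A)) := by module
      rw [e2, dsq hu hv huv, hs2]
      nlinarith [quadε ε (1 - θ) hε2 hεl (by linarith [hθ.2]) (by linarith [hθ.1]),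
        mul_pos hr hr]
    -- r ≤ infDist p₂ (segment C A)
    · refine le_infDist_of ⟨C, left_mem_segment ℝ C A⟩ ?_
      intro q hq
      rw [segment_eq_image'] at hq
      obtain ⟨θ, hθ, rfl⟩ := hq
      simp only [Set.mem_Icc] at hθ
      apply dist_lb hr dist_nonneg
      show r ^ 2 ≤ dist _ (C + θ • (A - C)) ^ 2
      have e2 : C + θ • (A - C) = A + ((0:ℝ) • (B - A) + (1 - θ) • (C - A)) := by module
      rw [e2, dsq hu hv huv, hs2]
      nlinarith [quadε (-ε) θ hε2' (by linarith) hθ.1 hθ.2, mul_pos hr hr]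
    -- r ≤ infDist p₂ (segment A B)
    · refine le_infDist_of ⟨A, left_mem_segment ℝ A B⟩ ?_
      intro q hq
      rw [segment_eq_image'] at hq
      obtain ⟨θ, hθ, rfl⟩ := hq
      simp only [Set.mem_Icc] at hθ
      apply dist_lb hr dist_nonneg
      show r ^ 2 ≤ dist _ (A + θ • (B - A)) ^ 2
      have e2 : A + θ • (B - A) = A + (θ • (B - A) + (0:ℝ) • (C - A)) := by module
      rw [e2, dsq hu hv huv, hs2]
      nlinarith [quadε ε (1 - θ) hε2 hεl (by linarith [hθ.2]) (by linarith [hθ.1]),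
        mul_pos hr hr]
    -- r ≤ infDist p₃ (segment A B)
    · refine le_infDist_of ⟨A, left_mem_segment ℝ A B⟩ ?_
      intro q hq
      rw [segment_eq_image'] at hq
      obtain ⟨θ, hθ, rfl⟩ := hq
      simp only [Set.mem_Icc] at hθ
      apply dist_lb hr dist_nonneg
      show r ^ 2 ≤ dist _ (A + θ • (B - A)) ^ 2
      have e2 : A + θ • (B - A) = A + (θ • (B - A) + (0:ℝ) • (C - A)) := by module
      rw [e2, dsq hu hv huv, hs2]
      nlinarith [quadε (-ε) θ hε2' (by linarith) hθ.1 hθ.2, mul_pos hr hr]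
    -- r ≤ infDist p₃ (segment B C)
    · refine le_infDist_of ⟨B, left_mem_segment ℝ B C⟩ ?_
      intro q hq
      rw [segment_eq_image'] at hq
      obtain ⟨θ, hθ, rfl⟩ := hq
      simp only [Set.mem_Icc] at hθ
      apply dist_lb hr dist_nonneg
      show r ^ 2 ≤ dist _ (B + θ • (C - B)) ^ 2
      have e2 : B + θ • (C - B) = A + ((1 - θ) • (B - A) + θ • (C - A)) := by module
      rw [e2, dsq hu hv huv, hs2]
      nlinarith [quadε ε (1 - θ) hε2 hεl (by linarith [hθ.2]) (by linarith [hθ.1]),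
        mul_pos hr hr]
    -- pairwise distances
    · refine pair_eq hr dist_nonneg ?_
      rw [dsq hu hv huv, hs2]
      linear_combination r ^ 2 * hε2
    · refine pair_eq hr dist_nonneg ?_
      rw [dsq hu hv huv, hs2]
      linear_combination r ^ 2 * hε2
    · refine pair_eq hr dist_nonneg ?_
      rw [dsq hu hv huv, hs2]
      linear_combination r ^ 2 * hε2
end

section
/- Let r > 0, h = r·(1 + √2/2), and m = 2√3·r. In the Euclidean plane, consider the three segments D = [(0,0), (h,h)] (the diagonal side), B₁ = [(0,0), (h+m, 0)] (the major base), and B₂ = [(h,h), (h+m, h)] (the minor base). Then there is exactly one point p on the segment D with dist(p, B₁) ≥ r and dist(p, B₂) ≥ r, namely p = (r, r); moreover this point satisfies dist(p, B₁) = r and dist(p, B₂) = r, with the nearest point of B₁ to p being (r,0), which lies on the sub-segment from (0,0) to (h,0). -/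
/-- The trapezoid-block gadget: with `r > 0`, `h = r(1 + √2/2)`,
`m = 2√3·r`, diagonal side `D = [(0,0),(h,h)]`, major base `B₁ = [(0,0),(h+m,0)]`
and minor base `B₂ = [(h,h),(h+m,h)]`, there is exactly one point `p` of `D` at
distance at least `r` from both bases, namely `p = (r,r)`; this point is at distance
exactly `r` from both bases, and the nearest point of `B₁` to it is `(r,0)`, which
lies on the sub-segment from `(0,0)` to `(h,0)`. -/
theorem stmt11 (r h m : ℝ) (hr : 0 < r)
    (hh : h = r * (1 + Real.sqrt 2 / 2)) (hm : m = 2 * Real.sqrt 3 * r)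
    (pt : ℝ → ℝ → EuclideanSpace ℝ (Fin 2))
    (hpt : ∀ x y, pt x y = (EuclideanSpace.equiv (Fin 2) ℝ).symm ![x, y])
    (D B₁ B₂ : Set (EuclideanSpace ℝ (Fin 2)))
    (hD : D = segment ℝ (pt 0 0) (pt h h))
    (hB₁ : B₁ = segment ℝ (pt 0 0) (pt (h + m) 0))
    (hB₂ : B₂ = segment ℝ (pt h h) (pt (h + m) h)) :
    {p | p ∈ D ∧ r ≤ Metric.infDist p B₁ ∧ r ≤ Metric.infDist p B₂} = {pt r r} ∧
    Metric.infDist (pt r r) B₁ = r ∧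
    Metric.infDist (pt r r) B₂ = r ∧
    dist (pt r r) (pt r 0) = r ∧
    (∀ q ∈ B₁, dist (pt r r) (pt r 0) ≤ dist (pt r r) q) ∧
    (∀ q ∈ B₁, dist (pt r r) q = r → q = pt r 0) ∧
    pt r 0 ∈ segment ℝ (pt 0 0) (pt h 0) := by
  -- basic numeric facts
  have s2pos : (0:ℝ) < Real.sqrt 2 := Real.sqrt_pos.mpr (by norm_num)
  have s2sq : Real.sqrt 2 * Real.sqrt 2 = 2 := Real.mul_self_sqrt (by norm_num)
  have s3nn : (0:ℝ) ≤ Real.sqrt 3 := Real.sqrt_nonneg 3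
  have hm0 : 0 ≤ m := by rw [hm]; positivity
  have hrh : r ≤ h := by nlinarith [hr.le, s2pos.le]
  have hh0 : 0 < h := lt_of_lt_of_le hr hrh
  have hhm : 0 < h + m := by linarith
  have key : Real.sqrt 2 * (h - r) = r := by rw [hh]; nlinarith [s2sq]
  -- lower bound for infDist
  have le_inf : ∀ (x : EuclideanSpace ℝ (Fin 2)) (s : Set (EuclideanSpace ℝ (Fin 2))) (b : ℝ),
      s.Nonempty → (∀ y ∈ s, b ≤ dist x y) → b ≤ Metric.infDist x s := by
    intro x s b hs hb
    by_contra hlt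
    push_neg at hlt
    obtain ⟨y, hy, hdy⟩ := (Metric.infDist_lt_iff hs).mp hlt
    exact absurd (hb y hy) (not_le.mpr hdy)
  -- distance formula
  have hdist : ∀ a b c d : ℝ, dist (pt a b) (pt c d) = Real.sqrt ((a-c)^2 + (b-d)^2) := by
    intro a b c d
    rw [hpt, hpt, EuclideanSpace.dist_eq]
    congr 1
    simp [Fin.sum_univ_two, Real.dist_eq, sq_abs]
  -- convex combination formula
  have hcomb : ∀ t a b c d : ℝ,
      (1-t) • pt a b + t • pt c d = pt ((1-t)*a + t*c) ((1-t)*b + t*d) := by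
    intro t a b c d
    simp only [hpt, ← map_smul, ← map_add]
    congr 1
    funext i; fin_cases i <;> simp
  -- membership characterizations
  have hDmem : ∀ p, p ∈ D ↔ ∃ t, 0 ≤ t ∧ t ≤ 1 ∧ p = pt (t*h) (t*h) := by
    intro p
    rw [hD, segment_eq_image]
    constructor
    · rintro ⟨t, ⟨ht0, ht1⟩, rfl⟩
      exact ⟨t, ht0, ht1, by dsimp only; rw [hcomb]; ring_nf⟩
    · rintro ⟨t, ht0, ht1, rfl⟩
      exact ⟨t, ⟨ht0, ht1⟩, by dsimp only; rw [hcomb]; ring_nf⟩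
  have hB₁mem : ∀ q, q ∈ B₁ ↔ ∃ t, 0 ≤ t ∧ t ≤ 1 ∧ q = pt (t*(h+m)) 0 := by
    intro q
    rw [hB₁, segment_eq_image]
    constructor
    · rintro ⟨t, ⟨ht0, ht1⟩, rfl⟩
      exact ⟨t, ht0, ht1, by dsimp only; rw [hcomb]; ring_nf⟩
    · rintro ⟨t, ht0, ht1, rfl⟩
      exact ⟨t, ⟨ht0, ht1⟩, by dsimp only; rw [hcomb]; ring_nf⟩
  have hB₂mem : ∀ q, q ∈ B₂ ↔ ∃ t, 0 ≤ t ∧ t ≤ 1 ∧ q = pt (h + t*m) h := by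
    intro q
    rw [hB₂, segment_eq_image]
    constructor
    · rintro ⟨t, ⟨ht0, ht1⟩, rfl⟩
      exact ⟨t, ht0, ht1, by dsimp only; rw [hcomb]; ring_nf⟩
    · rintro ⟨t, ht0, ht1, rfl⟩
      exact ⟨t, ⟨ht0, ht1⟩, by dsimp only; rw [hcomb]; ring_nf⟩
  -- specific distances
  have dvert : ∀ s : ℝ, 0 ≤ s → dist (pt s s) (pt s 0) = s := by
    intro s hs
    rw [hdist]
    simp [Real.sqrt_sq hs]
  have ddiag : ∀ s : ℝ, s ≤ h → dist (pt s s) (pt h h) = Real.sqrt 2 * (h - s) := by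
    intro s hs
    rw [hdist]
    have : (s-h)^2 + (s-h)^2 = 2 * (h-s)^2 := by ring
    rw [this, Real.sqrt_mul (by norm_num), Real.sqrt_sq (by linarith)]
  -- lower bounds
  have lbB₁ : ∀ s : ℝ, 0 ≤ s → ∀ q ∈ B₁, s ≤ dist (pt s s) q := by
    intro s hs q hq
    obtain ⟨t, ht0, ht1, rfl⟩ := (hB₁mem q).mp hq
    rw [hdist]
    have : s = Real.sqrt (s^2) := (Real.sqrt_sq hs).symm
    rw [this]
    apply Real.sqrt_le_sqrt
    nlinarith [sq_nonneg (s - t*(h+m))]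
  have lbB₂ : ∀ s : ℝ, s ≤ h → ∀ q ∈ B₂, Real.sqrt 2 * (h - s) ≤ dist (pt s s) q := by
    intro s hs q hq
    obtain ⟨t, ht0, ht1, rfl⟩ := (hB₂mem q).mp hq
    rw [hdist]
    have h1 : Real.sqrt 2 * (h - s) = Real.sqrt (2 * (h-s)^2) := by
      rw [Real.sqrt_mul (by norm_num), Real.sqrt_sq (by linarith)]
    rw [h1]
    apply Real.sqrt_le_sqrt
    have htm : 0 ≤ t * m := mul_nonneg ht0 hm0
    nlinarith [sq_nonneg (t*m)]
  -- memberships of specific points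
  have mem_r0 : pt r 0 ∈ B₁ := (hB₁mem _).mpr ⟨r/(h+m), by positivity,
    by rw [div_le_one hhm]; linarith, by rw [div_mul_cancel₀ _ hhm.ne']⟩
  have mem_hh : pt h h ∈ B₂ := (hB₂mem _).mpr ⟨0, le_refl 0, by norm_num, by norm_num⟩
  have drr0 : dist (pt r r) (pt r 0) = r := dvert r hr.le
  have drhh : dist (pt r r) (pt h h) = r := by rw [ddiag r hrh, key]
  -- the two infDist values
  have iB₁ : Metric.infDist (pt r r) B₁ = r := by
    apply le_antisymm
    · calc Metric.infDist (pt r r) B₁ ≤ dist (pt r r) (pt r 0) :=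
            Metric.infDist_le_dist_of_mem mem_r0
        _ = r := drr0
    · exact le_inf _ _ _ ⟨_, mem_r0⟩ (lbB₁ r hr.le)
  have iB₂ : Metric.infDist (pt r r) B₂ = r := by
    apply le_antisymm
    · calc Metric.infDist (pt r r) B₂ ≤ dist (pt r r) (pt h h) :=
            Metric.infDist_le_dist_of_mem mem_hh
        _ = r := drhh
    · refine le_inf _ _ _ ⟨_, mem_hh⟩ ?_
      intro q hq
      calc r = Real.sqrt 2 * (h - r) := key.symm
        _ ≤ dist (pt r r) q := lbB₂ r hrh q hq
  refine ⟨?_, iB₁, iB₂, drr0, ?_, ?_, ?_⟩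
  · -- set equality
    ext p
    simp only [Set.mem_setOf_eq, Set.mem_singleton_iff]
    constructor
    · rintro ⟨hpD, h1, h2⟩
      obtain ⟨t, ht0, ht1, rfl⟩ := (hDmem p).mp hpD
      set s := t * h with hs
      have hs0 : 0 ≤ s := mul_nonneg ht0 hh0.le
      have hsh : s ≤ h := by
        rw [hs]; nlinarith
      -- r ≤ infDist ≤ dist to (s,0) = s
      have mem_s0 : pt s 0 ∈ B₁ := (hB₁mem _).mpr ⟨s/(h+m), by positivity,
        by rw [div_le_one hhm]; linarith, by rw [div_mul_cancel₀ _ hhm.ne']⟩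
      have h1' : r ≤ s := by
        calc r ≤ Metric.infDist (pt s s) B₁ := h1
          _ ≤ dist (pt s s) (pt s 0) := Metric.infDist_le_dist_of_mem mem_s0
          _ = s := dvert s hs0
      have h2' : r ≤ Real.sqrt 2 * (h - s) := by
        calc r ≤ Metric.infDist (pt s s) B₂ := h2
          _ ≤ dist (pt s s) (pt h h) := Metric.infDist_le_dist_of_mem mem_hh
          _ = Real.sqrt 2 * (h - s) := ddiag s hsh
      have hsr : s ≤ r := by nlinarith [key]
      have : s = r := le_antisymm hsr h1'
      rw [this]
    · rintro rfl
      refine ⟨(hDmem _).mpr ⟨r/h, by positivity, by rw [div_le_one hh0]; exact hrh,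
        by rw [div_mul_cancel₀ _ hh0.ne']⟩, iB₁.ge, iB₂.ge⟩
  · -- (r,0) is nearest on B₁
    intro q hq
    rw [drr0]
    exact lbB₁ r hr.le q hq
  · -- uniqueness of nearest point
    intro q hq hdq
    obtain ⟨t, ht0, ht1, rfl⟩ := (hB₁mem q).mp hq
    rw [hdist] at hdq
    have h0 : 0 ≤ (r - t*(h+m))^2 + (r-0)^2 := by positivity
    have := congrArg (· ^ 2) hdq
    simp only [Real.sq_sqrt h0] at this
    have hth : t * (h+m) = r := by nlinarith
    rw [hth]
  · -- (r,0) on sub-segment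
    rw [segment_eq_image]
    refine ⟨r/h, ⟨by positivity, by rw [div_le_one hh0]; exact hrh⟩, ?_⟩
    dsimp only
    rw [hcomb]
    have e1 : (1 - r/h)*0 + (r/h)*h = r := by field_simp; ring
    have e2 : (1 - r/h)*0 + (r/h)*0 = 0 := by ring
    rw [e1, e2]
end
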